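/- The tensor A of order 4 and dimension 2 with a_{1111} = 1, a_{1222} = -1, a_{2221} = 1 and all other entries zero is a P_0-tensor (indeed A x^4 = x_1^4 ≥ 0 for all x) but is not a column adequate tensor. -/

import Mathlib

open Finset Matrix

/-- For a tensor `A` of order `k+1` and dimension `n` (entries `A i f` with row index `i`
and remaining indices `f`), `tmul A x i = (A x^k)_i`. -/
def tmul {n k : ℕ} (A : Fin n → (Fin k → Fin n) → ℝ) (x : Fin n → ℝ) (i : Fin n) : ℝ :=
  ∑ f : Fin k → Fin n, A i f * ∏ j, x (f j)

/-- A tensor is column adequate if `x_i (A x^{m-1})_i ≤ 0` for all `i` implies `A x^{m-1} = 0`. -/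
def ColumnAdequate {n k : ℕ} (A : Fin n → (Fin k → Fin n) → ℝ) : Prop :=
  ∀ x : Fin n → ℝ, (∀ i, x i * tmul A x i ≤ 0) → ∀ i, tmul A x i = 0

/-- The order-4 dimension-2 tensor with `a_{1111} = 1`, `a_{1222} = -1`, `a_{2221} = 1`. -/
noncomputable def exTensor7 : Fin 2 → (Fin 3 → Fin 2) → ℝ := fun i f =>
  if i = 0 ∧ f = ![0, 0, 0] then 1
  else if i = 0 ∧ f = ![1, 1, 1] then -1
  else if i = 1 ∧ f = ![1, 1, 0] then 1
  else 0

theorem exists_ne_zero_and_mul_nonneg_of_sum_mul_nonneg {ι : Type*} [Fintype ι]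
    {x y : ι → ℝ} (hx : x ≠ 0) (hsum : 0 ≤ ∑ i, x i * y i) :
    ∃ i, x i ≠ 0 ∧ 0 ≤ x i * y i := by
  by_contra! hneg
  obtain ⟨i₀, hi₀⟩ := Function.ne_iff.mp hx
  have hterm_nonpos (i : ι) : x i * y i ≤ 0 := by
    by_cases hi : x i = 0
    · simp [hi]
    · exact (hneg i hi).le
  have : ∑ i, x i * y i < ∑ _i : ι, (0 : ℝ) :=
    Finset.sum_lt_sum (fun i _ => hterm_nonpos i) ⟨i₀, mem_univ _, hneg i₀ hi₀⟩
  simp only [sum_const_zero] at this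
  linarith

lemma tmul_exTensor7_zero (x : Fin 2 → ℝ) : tmul exTensor7 x 0 = x 0 ^ 3 - x 1 ^ 3 := by
  rw [tmul, Finset.sum_eq_add_of_mem ![0, 0, 0] ![1, 1, 1] (mem_univ _) (mem_univ _) (by decide)
    (fun f _ hf => by simp [exTensor7, hf.1, hf.2])]
  simp [exTensor7, Fin.prod_univ_three, pow_succ, sub_eq_add_neg, mul_assoc]

lemma tmul_exTensor7_one (x : Fin 2 → ℝ) : tmul exTensor7 x 1 = x 0 * x 1 ^ 2 := by
  rw [tmul, Fintype.sum_eq_single ![1, 1, 0] (fun f hf => by simp [exTensor7, hf])]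
  simp [exTensor7, Fin.prod_univ_three, pow_two, mul_comm]

lemma sum_mul_tmul_exTensor7 (x : Fin 2 → ℝ) : ∑ i, x i * tmul exTensor7 x i = x 0 ^ 4 := by
  rw [Fin.sum_univ_two, tmul_exTensor7_zero, tmul_exTensor7_one]
  ring

-- At `x = (0, 1)` both products `x_i (A x^3)_i` vanish, while `(A x^3)_1 = -1`.
lemma not_columnAdequate_exTensor7 : ¬ ColumnAdequate exTensor7 := by
  intro hA
  have h := hA ![0, 1] (fun i => by fin_cases i <;> simp [tmul_exTensor7_zero, tmul_exTensor7_one]) 0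
  norm_num [tmul_exTensor7_zero] at h

/-- This tensor satisfies `A x^4 = x_1^4 ≥ 0`, is a `P₀`-tensor,
but is not column adequate. -/
theorem exTensor7_P0_not_column_adequate :
    (∀ x : Fin 2 → ℝ, ∑ i, x i * tmul exTensor7 x i = (x 0) ^ 4) ∧
    (∀ x : Fin 2 → ℝ, x ≠ 0 → ∃ i, x i ≠ 0 ∧ 0 ≤ x i * tmul exTensor7 x i) ∧
    ¬ ColumnAdequate exTensor7 :=
  ⟨sum_mul_tmul_exTensor7,
    fun x hx => exists_ne_zero_and_mul_nonneg_of_sum_mul_nonneg hx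
      (by rw [sum_mul_tmul_exTensor7]; positivity),
    not_columnAdequate_exTensor7⟩
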